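/- Let J be a dyadic interval, let n ∈ ℤ with |n| ≥ 3, and let J^n := J + n|J|. Then for every integer M ≥ 3 there exists a constant C_M (independent of J, n and f) such that for every f ∈ L¹(ℝ): Σ over all dyadic intervals I ⊆ J of ∫_ℝ |f(y)| 1_{J^n}(y) χ̃_I(y)^M dy ≤ C_M (2+|n|)^{−M+2} ∫_{J^n} |f(y)| dy. -/

import Mathlib

open MeasureTheory Set

noncomputable section

/-- The approximate cutoff `χ̃_I(x) = (1 + ((x − x_I)/|I|)²)^{−1/2}` for an interval with
center `c` and length `l`. -/
def chiTilde (c l x : ℝ) : ℝ := (1 + ((x - c) / l) ^ 2) ^ (-(1/2) : ℝ)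

/-- The dyadic interval `[2^k m, 2^k(m+1))`. -/
def dyadic (k m : ℤ) : Set ℝ := Set.Ico ((2:ℝ)^k * m) ((2:ℝ)^k * (m + 1))

lemma chiTilde_nonneg (c l x : ℝ) : 0 ≤ chiTilde c l x :=
  Real.rpow_nonneg (by positivity) _

lemma chiTilde_le_one (c l x : ℝ) : chiTilde c l x ≤ 1 :=
  Real.rpow_le_one_of_one_le_of_nonpos (by nlinarith [sq_nonneg ((x - c) / l)]) (by norm_num)

lemma chiTilde_continuous (c l : ℝ) : Continuous fun x => chiTilde c l x := by
  apply Continuous.rpow_const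
  · exact continuous_const.add (((continuous_id.sub continuous_const).div_const l).pow 2)
  · intro x; left; positivity

lemma chiTilde_le (c l x D : ℝ) (hl : 0 < l) (hD : 0 < D) (h : D ≤ |x - c|) :
    chiTilde c l x ≤ l / D := by
  set t := (x - c) / l with ht
  have habs : D / l ≤ |t| := by
    rw [ht, abs_div, abs_of_pos hl]
    exact (div_le_div_iff_of_pos_right hl).2 h
  have htpos : 0 < |t| := lt_of_lt_of_le (by positivity) habs
  have ht0 : t ≠ 0 := by simpa using htpos.ne'
  have h1 : chiTilde c l x ≤ (t ^ 2) ^ (-(1/2) : ℝ) := by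
    apply Real.rpow_le_rpow_of_nonpos (by positivity) (by nlinarith) (by norm_num)
  have h2 : (t ^ 2 : ℝ) ^ (-(1/2) : ℝ) = |t|⁻¹ := by
    rw [← sq_abs, ← Real.rpow_natCast |t| 2, ← Real.rpow_mul (abs_nonneg t)]
    norm_num [Real.rpow_neg_one]
  have h3 : |t|⁻¹ ≤ (D / l)⁻¹ := inv_anti₀ (by positivity) habs
  rw [inv_div] at h3
  calc chiTilde c l x ≤ (t ^ 2) ^ (-(1/2) : ℝ) := h1
    _ = |t|⁻¹ := h2
    _ ≤ l / D := h3

set_option maxHeartbeats 1000000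

/-- **tail estimate.** For every integer `M ≥ 3` there is a constant
`C_M` such that for every dyadic interval `J = [2^k m, 2^k(m+1))`, every `n ∈ ℤ` with
`|n| ≥ 3` and every `f ∈ L¹(ℝ)`, summing over all dyadic intervals `I ⊆ J`:
`Σ_I ∫ |f(y)| 1_{J^n}(y) χ̃_I(y)^M dy ≤ C_M (2+|n|)^{−M+2} ∫_{J^n} |f(y)| dy`,
where `J^n = J + n|J|`. -/
theorem stmt_19 (M : ℕ) (hM : 3 ≤ M) :
    ∃ C : ℝ, 0 < C ∧ ∀ (k m n : ℤ), 3 ≤ |n| → ∀ f : ℝ → ℂ, Integrable f →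
      (∑' I : {q : ℤ × ℤ // dyadic q.1 q.2 ⊆ dyadic k m},
          ∫ y in dyadic k (m + n),
            ‖f y‖ * (chiTilde ((2:ℝ)^(I.1.1) * I.1.2 + (2:ℝ)^(I.1.1) / 2)
              ((2:ℝ)^(I.1.1)) y) ^ M)
        ≤ C * (2 + |(n:ℝ)|) ^ ((2:ℤ) - M) * ∫ y in dyadic k (m + n), ‖f y‖ := by
  refine ⟨2 * (5/2 : ℝ) ^ M, by positivity, ?_⟩
  intro k m n hn f hf
  classical
  have h2k : (0:ℝ) < (2:ℝ) ^ k := zpow_pos (by norm_num) k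
  have hnR : (3:ℝ) ≤ |(n:ℝ)| := by exact_mod_cast hn
  set A := ∫ y in dyadic k (m + n), ‖f y‖ with hAdef
  have hA0 : 0 ≤ A := integral_nonneg fun y => norm_nonneg _
  -- basic structural facts about dyadic subintervals
  have key : ∀ k' m' : ℤ, dyadic k' m' ⊆ dyadic k m →
      k' ≤ k ∧ (2:ℝ)^k * m ≤ (2:ℝ)^k' * m' ∧ (2:ℝ)^k' * (m'+1) ≤ (2:ℝ)^k * (m+1) := by
    intro k' m' hsub
    have h2k' : (0:ℝ) < (2:ℝ) ^ k' := zpow_pos (by norm_num) k'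
    have hne : (2:ℝ)^k' * m' < (2:ℝ)^k' * ((m':ℝ)+1) := by nlinarith
    rw [dyadic, dyadic] at hsub
    push_cast at hsub
    rw [Set.Ico_subset_Ico_iff hne] at hsub
    refine ⟨?_, by push_cast; exact hsub.1, by push_cast; exact hsub.2⟩
    have hlen : (2:ℝ)^k' ≤ (2:ℝ)^k := by nlinarith [hsub.1, hsub.2]
    exact (zpow_le_zpow_iff_right₀ (by norm_num : (1:ℝ) < 2)).1 hlen
  set S := dyadic k (m + n) with hSdef
  set F : {q : ℤ × ℤ // dyadic q.1 q.2 ⊆ dyadic k m} → ℝ := fun I =>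
    ∫ y in S, ‖f y‖ * (chiTilde ((2:ℝ)^(I.1.1) * I.1.2 + (2:ℝ)^(I.1.1) / 2)
      ((2:ℝ)^(I.1.1)) y) ^ M with hFdef
  set E : ℝ := ((|(n:ℝ)| - 1) ^ M)⁻¹ with hEdef
  set r : ℝ := ((1:ℝ)/2) ^ M with hrdef
  have hE0 : 0 ≤ E := inv_nonneg.2 (pow_nonneg (by linarith) M)
  have hr0 : 0 ≤ r := by positivity
  set jq : {q : ℤ × ℤ // dyadic q.1 q.2 ⊆ dyadic k m} → ℕ :=
    fun q => (k - q.1.1).toNat with hjq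
  have hkeq : ∀ q, q.1.1 = k - (jq q : ℤ) := by
    intro q
    have := (key q.1.1 q.1.2 q.2).1
    simp only [hjq]
    omega
  have h2keq : ∀ q, (2:ℝ)^(q.1.1) = (2:ℝ)^k * ((1:ℝ)/2)^(jq q) := by
    intro q
    rw [hkeq q, zpow_sub₀ (by norm_num : (2:ℝ) ≠ 0), zpow_natCast]
    rw [div_eq_mul_inv, one_div, inv_pow]
  -- integer bounds on m'
  have hmlb : ∀ q, (2:ℤ)^(jq q) * m ≤ q.1.2 := by
    intro q
    have h2k' : (0:ℝ) < (2:ℝ) ^ (q.1.1) := zpow_pos (by norm_num) _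
    have h1 := (key q.1.1 q.1.2 q.2).2.1
    have h2 : (2:ℝ)^k = (2:ℝ)^(q.1.1) * (2:ℝ)^(jq q : ℕ) := by
      rw [hkeq q, ← zpow_natCast (2:ℝ) (jq q), ← zpow_add₀ (by norm_num : (2:ℝ) ≠ 0)]
      ring_nf
    have : ((2:ℝ)^(jq q : ℕ) * m) ≤ q.1.2 := by
      rw [h2] at h1
      have := (mul_le_mul_iff_right₀ h2k').1 (by linarith [h1] : (2:ℝ)^(q.1.1) * ((2:ℝ)^(jq q:ℕ) * m) ≤ (2:ℝ)^(q.1.1) * q.1.2)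
      exact this
    exact_mod_cast this
  have hmub : ∀ q, q.1.2 + 1 ≤ (2:ℤ)^(jq q) * (m + 1) := by
    intro q
    have h2k' : (0:ℝ) < (2:ℝ) ^ (q.1.1) := zpow_pos (by norm_num) _
    have h1 := (key q.1.1 q.1.2 q.2).2.2
    have h2 : (2:ℝ)^k = (2:ℝ)^(q.1.1) * (2:ℝ)^(jq q : ℕ) := by
      rw [hkeq q, ← zpow_natCast (2:ℝ) (jq q), ← zpow_add₀ (by norm_num : (2:ℝ) ≠ 0)]
      ring_nf
    have : ((q.1.2:ℝ) + 1) ≤ (2:ℝ)^(jq q : ℕ) * ((m:ℝ) + 1) := by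
      rw [h2] at h1
      have := (mul_le_mul_iff_right₀ h2k').1 (by linarith [h1] : (2:ℝ)^(q.1.1) * ((q.1.2:ℝ)+1) ≤ (2:ℝ)^(q.1.1) * ((2:ℝ)^(jq q:ℕ) * ((m:ℝ)+1)))
      exact this
    exact_mod_cast this
  -- the distance estimate and the pointwise bound
  have hFle : ∀ q, F q ≤ r ^ (jq q) * E * A := by
    intro q
    obtain ⟨hk'le, ha, hb⟩ := key q.1.1 q.1.2 q.2
    have h2k' : (0:ℝ) < (2:ℝ) ^ (q.1.1) := zpow_pos (by norm_num) _
    have h2k'le : (2:ℝ)^(q.1.1) ≤ (2:ℝ)^k :=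
      zpow_le_zpow_right₀ (by norm_num : (1:ℝ) ≤ 2) hk'le
    set c : ℝ := (2:ℝ)^(q.1.1) * q.1.2 + (2:ℝ)^(q.1.1) / 2 with hcdef
    set l : ℝ := (2:ℝ)^(q.1.1) with hldef
    have hcmem : (2:ℝ)^k * m ≤ c ∧ c ≤ (2:ℝ)^k * (m+1) := by
      constructor
      · rw [hcdef]; nlinarith
      · rw [hcdef]; nlinarith
    set D : ℝ := (|(n:ℝ)| - 1) * (2:ℝ)^k with hDdef
    have hD0 : 0 < D := by rw [hDdef]; nlinarith
    have hdist : ∀ y ∈ S, D ≤ |y - c| := by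
      intro y hy
      rw [hSdef, dyadic] at hy
      obtain ⟨hy1, hy2⟩ := hy
      push_cast at hy1 hy2
      rcases le_or_gt 0 n with hn0 | hn0
      · have hnn : |(n:ℝ)| = (n:ℝ) := abs_of_nonneg (by exact_mod_cast hn0)
        have : D ≤ y - c := by rw [hDdef, hnn]; nlinarith [hcmem.2]
        exact this.trans (le_abs_self _)
      · have hnn : |(n:ℝ)| = -(n:ℝ) := abs_of_neg (by exact_mod_cast hn0)
        have : D ≤ c - y := by rw [hDdef, hnn]; nlinarith [hcmem.1]
        calc D ≤ c - y := this
          _ ≤ |y - c| := by rw [abs_sub_comm]; exact le_abs_self _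
    have hchiM : ∀ y ∈ S, (chiTilde c l y) ^ M ≤ r ^ (jq q) * E := by
      intro y hy
      have h1 : chiTilde c l y ≤ l / D := chiTilde_le c l y D h2k' hD0 (hdist y hy)
      have h2 : (chiTilde c l y) ^ M ≤ (l / D) ^ M :=
        pow_le_pow_left₀ (chiTilde_nonneg _ _ _) h1 M
      have h3 : (l / D) ^ M = r ^ (jq q) * E := by
        rw [hldef, hDdef, h2keq q, hEdef, hrdef]
        rw [div_pow]
        have h2kne : ((2:ℝ)^k) ≠ 0 := ne_of_gt h2k
        have hne : (|(n:ℝ)| - 1) ≠ 0 := by nlinarith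
        field_simp
        rw [mul_pow, ← pow_mul, mul_comm (jq q) M, mul_pow]
        ring
      calc (chiTilde c l y) ^ M ≤ (l / D) ^ M := h2
        _ = r ^ (jq q) * E := h3
    -- integrate the pointwise bound
    have hmeasS : MeasurableSet S := by rw [hSdef, dyadic]; exact measurableSet_Ico
    have hint1 : IntegrableOn (fun y => ‖f y‖ * (chiTilde c l y) ^ M) S := by
      apply Integrable.mono' (hf.norm.restrict (s := S))
      · exact (hf.norm.aestronglyMeasurable.restrict).mul
          (((chiTilde_continuous c l).pow M).aestronglyMeasurable.restrict)
      · refine Filter.Eventually.of_forall fun y => ?_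
        have h0 : (0:ℝ) ≤ ‖f y‖ * (chiTilde c l y) ^ M :=
          mul_nonneg (norm_nonneg _) (pow_nonneg (chiTilde_nonneg _ _ _) M)
        rw [Real.norm_of_nonneg h0]
        have : (chiTilde c l y) ^ M ≤ 1 :=
          pow_le_one₀ (chiTilde_nonneg _ _ _) (chiTilde_le_one _ _ _)
        nlinarith [norm_nonneg (f y)]
    have hint2 : IntegrableOn (fun y => ‖f y‖ * (r ^ (jq q) * E)) S :=
      (hf.norm.restrict (s := S)).mul_const _
    have hmono := setIntegral_mono_on hint1 hint2 hmeasS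
      (fun y hy => mul_le_mul_of_nonneg_left (hchiM y hy) (norm_nonneg _))
    have heval : ∫ y in S, ‖f y‖ * (r ^ (jq q) * E) = r ^ (jq q) * E * A := by
      rw [integral_mul_const, hAdef]; ring
    calc F q ≤ ∫ y in S, ‖f y‖ * (r ^ (jq q) * E) := hmono
      _ = r ^ (jq q) * E * A := heval
  -- nonnegativity of the terms
  have hF0 : ∀ q, 0 ≤ F q := fun q =>
    integral_nonneg fun y => mul_nonneg (norm_nonneg _) (pow_nonneg (chiTilde_nonneg _ _ _) M)
  -- the dominating function on `Σ j, Fin (2^j)`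
  set g : (Σ j : ℕ, Fin (2^j)) → ℝ := fun p => r ^ p.1 * E * A with hgdef
  have hg0 : ∀ p, 0 ≤ g p := fun p => mul_nonneg (mul_nonneg (pow_nonneg hr0 _) hE0) hA0
  have hilt : ∀ q, ((q.1.2 - 2^(jq q) * m).toNat) < 2^(jq q) := by
    intro q
    have h1 := hmlb q
    have h2 := hmub q
    have hdistr : (2:ℤ)^(jq q) * (m + 1) = 2^(jq q) * m + 2^(jq q) := by ring
    have h0 : (0:ℤ) ≤ q.1.2 - 2^(jq q) * m := by linarith
    have hlt : ((q.1.2 - 2^(jq q) * m).toNat : ℤ) < (2:ℤ)^(jq q) := by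
      rw [Int.toNat_of_nonneg h0]; linarith
    exact_mod_cast hlt
  set φ : {q : ℤ × ℤ // dyadic q.1 q.2 ⊆ dyadic k m} → (Σ j : ℕ, Fin (2^j)) :=
    fun q => ⟨jq q, ⟨(q.1.2 - 2^(jq q) * m).toNat, hilt q⟩⟩ with hφdef
  have hinj : Function.Injective φ := by
    intro q1 q2 h
    have hj : jq q1 = jq q2 := congrArg Sigma.fst h
    have hk1 : q1.1.1 = q2.1.1 := by rw [hkeq q1, hkeq q2, hj]
    have hv : ((q1.1.2 - 2^(jq q1) * m).toNat) = ((q2.1.2 - 2^(jq q2) * m).toNat) := by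
      have := congrArg (fun p : (Σ j : ℕ, Fin (2^j)) => (p.2 : ℕ)) h
      simpa [hφdef] using this
    have h01 : (0:ℤ) ≤ q1.1.2 - 2^(jq q1) * m := by linarith [hmlb q1]
    have h02 : (0:ℤ) ≤ q2.1.2 - 2^(jq q2) * m := by linarith [hmlb q2]
    have hm12 : q1.1.2 = q2.1.2 := by
      rw [hj] at hv h01
      set P : ℤ := 2^(jq q2) * m with hP
      omega
    exact Subtype.ext (Prod.ext hk1 hm12)
  -- geometric series facts
  have hrsmall : r ≤ 1/8 := by
    rw [hrdef]
    calc ((1:ℝ)/2)^M ≤ ((1:ℝ)/2)^3 := pow_le_pow_of_le_one (by norm_num) (by norm_num) hM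
      _ = 1/8 := by norm_num
  have heq : ∀ j : ℕ, ∑' i : Fin (2^j), g ⟨j, i⟩ = (2*r)^j * (E*A) := by
    intro j
    rw [tsum_fintype]
    simp only [hgdef, Finset.sum_const, Finset.card_univ, Fintype.card_fin, nsmul_eq_mul,
      mul_pow]
    push_cast
    ring
  have hgeo : Summable (fun j : ℕ => ((2:ℝ)*r)^j) :=
    summable_geometric_of_lt_one (by linarith) (by linarith)
  have hsumg : Summable g := by
    apply (summable_sigma_of_nonneg hg0).2
    constructor
    · intro j; exact (hasSum_fintype _).summable
    · have : (fun j : ℕ => ∑' i : Fin (2^j), g ⟨j, i⟩) = fun j => (2*r)^j * (E*A) := funext heq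
      rw [this]
      exact hgeo.mul_right _
  have htsumg : ∑' p, g p ≤ 2 * (E * A) := by
    rw [Summable.tsum_sigma hsumg]
    have hEA : 0 ≤ E * A := mul_nonneg hE0 hA0
    calc ∑' j : ℕ, ∑' i : Fin (2^j), g ⟨j, i⟩ = ∑' j : ℕ, (2*r)^j * (E*A) := tsum_congr heq
      _ = (1 - 2*r)⁻¹ * (E*A) := by
          rw [tsum_mul_right, tsum_geometric_of_lt_one (by linarith) (by linarith)]
      _ ≤ 2 * (E*A) := by
          have hinv : (1 - 2*r)⁻¹ ≤ 2 := by
            have h12 : (1:ℝ)/2 ≤ 1 - 2*r := by linarith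
            have := inv_anti₀ (by norm_num : (0:ℝ) < 1/2) h12
            norm_num at this
            linarith
          exact mul_le_mul_of_nonneg_right hinv hEA
  have hle : ∀ q, F q ≤ g (φ q) := fun q => hFle q
  have hsumF : Summable F := Summable.of_nonneg_of_le hF0 hle (hsumg.comp_injective hinj)
  have main : ∑' q, F q ≤ ∑' p, g p :=
    Summable.tsum_le_tsum_of_inj φ hinj (fun p _ => hg0 p) hle hsumF hsumg
  -- final constant juggling
  have hb0 : (0:ℝ) < 2 + |(n:ℝ)| := by linarith
  have hpow0 : (0:ℝ) < (2 + |(n:ℝ)|)^M := pow_pos hb0 M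
  have hpow1 : (0:ℝ) < (|(n:ℝ)| - 1)^M := pow_pos (by linarith) M
  have h1 : (2 + |(n:ℝ)|)^M ≤ (5/2:ℝ)^M * (|(n:ℝ)| - 1)^M := by
    calc (2 + |(n:ℝ)|)^M ≤ ((5/2) * (|(n:ℝ)| - 1))^M :=
          pow_le_pow_left₀ (by linarith) (by linarith) M
      _ = (5/2:ℝ)^M * (|(n:ℝ)| - 1)^M := mul_pow _ _ M
  have hE1 : E ≤ (5/2:ℝ)^M * ((2 + |(n:ℝ)|)^M)⁻¹ := by
    rw [hEdef]
    have := (div_le_div_iff₀ hpow1 hpow0).2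
      (by nlinarith : (1:ℝ) * (2 + |(n:ℝ)|)^M ≤ (5/2:ℝ)^M * (|(n:ℝ)| - 1)^M)
    rw [one_div] at this
    rw [div_eq_mul_inv] at this
    exact this
  have hz : ((2 + |(n:ℝ)|)^M)⁻¹ ≤ (2 + |(n:ℝ)|) ^ ((2:ℤ) - M) := by
    rw [← zpow_natCast (2 + |(n:ℝ)|) M, ← zpow_neg]
    exact zpow_le_zpow_right₀ (by linarith) (by omega)
  have hE2 : E ≤ (5/2:ℝ)^M * (2 + |(n:ℝ)|) ^ ((2:ℤ) - M) := by
    calc E ≤ (5/2:ℝ)^M * ((2 + |(n:ℝ)|)^M)⁻¹ := hE1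
      _ ≤ (5/2:ℝ)^M * (2 + |(n:ℝ)|) ^ ((2:ℤ) - M) :=
          mul_le_mul_of_nonneg_left hz (by positivity)
  have hfinal : 2 * (E * A) ≤ 2 * (5/2:ℝ)^M * (2 + |(n:ℝ)|) ^ ((2:ℤ) - M) * A := by
    have := mul_le_mul_of_nonneg_right hE2 hA0
    nlinarith [this]
  calc ∑' q, F q ≤ ∑' p, g p := main
    _ ≤ 2 * (E * A) := htsumg
    _ ≤ 2 * (5/2:ℝ)^M * (2 + |(n:ℝ)|) ^ ((2:ℤ) - M) * A := hfinal

end
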